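/- (Corollary 3, conservation law) Fix d ≥ 1 and an onsite symmetry (G, u), and let Ω be a flow (satisfying flow properties (1)–(4)). Let Λ be a finite metric space of sites, let U be a G-symmetric strict LPU on Λ with operator spreading length ξ, and let A, B ⊆ Λ. If (∂_{4ξ} A) ∩ B = ∅ or A ∩ (∂_{4ξ} B) = ∅, then Ω^Λ_{A,B}(U) = 0. -/

import Mathlib

open Matrix

/-- A matrix on the many-body space `ι = Λ → Fin d` is supported on `S ⊆ Λ` if its entries
vanish whenever the two configurations differ at a site outside `S`, and otherwise depend
only on the restrictions of the configurations to `S`. -/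
def SupportedOn {Λ : Type*} {d : ℕ} (S : Set Λ)
    (M : Matrix (Λ → Fin d) (Λ → Fin d) ℂ) : Prop :=
  (∀ x y, (∃ r ∉ S, x r ≠ y r) → M x y = 0) ∧
  (∀ x y x' y', (∀ r ∈ S, x r = x' r) → (∀ r ∈ S, y r = y' r) →
    (∀ r ∉ S, x r = y r) → (∀ r ∉ S, x' r = y' r) → M x y = M x' y')

/-- A matrix is unitary if `Mᴴ M = 1 = M Mᴴ`. -/
def IsUnitaryMat {ι : Type*} [Fintype ι] [DecidableEq ι] (M : Matrix ι ι ℂ) : Prop :=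
  Mᴴ * M = 1 ∧ M * Mᴴ = 1

/-- The global onsite symmetry operator `U_g`, with entries `∏_r u(g)_{x(r),y(r)}`. -/
def symOp {Λ : Type*} [Fintype Λ] {d : ℕ} {G : Type*}
    (u : G → Matrix (Fin d) (Fin d) ℂ) (g : G) :
    Matrix (Λ → Fin d) (Λ → Fin d) ℂ :=
  Matrix.of fun x y => ∏ r, u g (x r) (y r)

/-- A matrix is `G`-symmetric if it commutes with every global symmetry operator. -/
def IsGSymm {Λ : Type*} [Fintype Λ] [DecidableEq Λ] {d : ℕ} {G : Type*}
    (u : G → Matrix (Fin d) (Fin d) ℂ)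
    (M : Matrix (Λ → Fin d) (Λ → Fin d) ℂ) : Prop :=
  ∀ g, M * symOp u g = symOp u g * M

/-- The `ℓ`-thickened boundary `∂_ℓ S = {r : dist(r,S) ≤ ℓ and dist(r,Λ∖S) ≤ ℓ}`. -/
def thickBd {Λ : Type*} [MetricSpace Λ] (ℓ : ℝ) (S : Set Λ) : Set Λ :=
  {r | (∃ s ∈ S, dist r s ≤ ℓ) ∧ (∃ s ∈ Sᶜ, dist r s ≤ ℓ)}

/-- A strict locality-preserving unitary with operator spreading length `ξ`: conjugation
maps any operator supported on a single site `r` to one supported in the closed ball of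
radius `ξ` around `r`. -/
def IsStrictLPU {Λ : Type*} [Fintype Λ] [DecidableEq Λ] [MetricSpace Λ] {d : ℕ}
    (ξ : ℝ) (U : Matrix (Λ → Fin d) (Λ → Fin d) ℂ) : Prop :=
  IsUnitaryMat U ∧ ∀ (r : Λ) (O : Matrix (Λ → Fin d) (Λ → Fin d) ℂ),
    SupportedOn {r} O → SupportedOn (Metric.closedBall r ξ) (Uᴴ * O * U)

/-- A flow: an assignment, to every finite lattice `Λ'`, subsets `A, B ⊆ Λ'` and
`G`-symmetric unitary `U` on `Λ' → Fin d`, of a real number `Ω^{Λ'}_{A,B}(U)`, satisfying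
the four defining properties of Definition 1. -/
structure LatticeFlow (d : ℕ) (G : Type) [Group G] (u : G → Matrix (Fin d) (Fin d) ℂ) where
  omega : (Λ' : Type) → [Fintype Λ'] → [DecidableEq Λ'] → Set Λ' → Set Λ' →
    Matrix (Λ' → Fin d) (Λ' → Fin d) ℂ → ℝ
  /-- (1): invariance under left multiplication by `G`-symmetric unitaries supported on
  `A` or on its complement. -/
  left_inv : ∀ (Λ' : Type) [Fintype Λ'] [DecidableEq Λ'] (A B : Set Λ')
    (U V : Matrix (Λ' → Fin d) (Λ' → Fin d) ℂ),
    IsUnitaryMat U → IsGSymm u U → IsUnitaryMat V → IsGSymm u V →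
    (SupportedOn A V ∨ SupportedOn Aᶜ V) →
    omega Λ' A B (V * U) = omega Λ' A B U
  /-- (2): invariance under right multiplication by `G`-symmetric unitaries supported on
  `B` or on its complement. -/
  right_inv : ∀ (Λ' : Type) [Fintype Λ'] [DecidableEq Λ'] (A B : Set Λ')
    (U V : Matrix (Λ' → Fin d) (Λ' → Fin d) ℂ),
    IsUnitaryMat U → IsGSymm u U → IsUnitaryMat V → IsGSymm u V →
    (SupportedOn B V ∨ SupportedOn Bᶜ V) →
    omega Λ' A B (U * V) = omega Λ' A B U
  /-- (3): additivity under stacking (disjoint-union lattices and Kronecker products). -/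
  stacking : ∀ (Λ₁ Λ₂ : Type) [Fintype Λ₁] [DecidableEq Λ₁] [Fintype Λ₂] [DecidableEq Λ₂]
    (A₁ B₁ : Set Λ₁) (A₂ B₂ : Set Λ₂)
    (U₁ : Matrix (Λ₁ → Fin d) (Λ₁ → Fin d) ℂ) (U₂ : Matrix (Λ₂ → Fin d) (Λ₂ → Fin d) ℂ),
    IsUnitaryMat U₁ → IsGSymm u U₁ → IsUnitaryMat U₂ → IsGSymm u U₂ →
    omega (Λ₁ ⊕ Λ₂) (Sum.inl '' A₁ ∪ Sum.inr '' A₂) (Sum.inl '' B₁ ∪ Sum.inr '' B₂)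
      (Matrix.reindex (Equiv.sumArrowEquivProdArrow Λ₁ Λ₂ (Fin d)).symm
        (Equiv.sumArrowEquivProdArrow Λ₁ Λ₂ (Fin d)).symm
        (Matrix.kroneckerMap (· * ·) U₁ U₂)) =
      omega Λ₁ A₁ B₁ U₁ + omega Λ₂ A₂ B₂ U₂
  /-- (4): normalization `Ω_{A,B}(𝟙) = 0`. -/
  norm_one : ∀ (Λ' : Type) [Fintype Λ'] [DecidableEq Λ'] (A B : Set Λ'),
    omega Λ' A B 1 = 0

/-!
Stack `Uᴴ` and `U` on two copies of the lattice. By additivity,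
`Ω_{A⊔A, ∅⊔B}(Uᴴ ⊗ U) = Ω_{A,∅}(Uᴴ) + Ω_{A,B}(U)`, and `Ω_{A,∅}(Uᴴ) = 0` because `Uᴴ`, being
supported on `∅ᶜ`, can be stripped off on the right. Write `SW_X` for the swap of the two copies
on the sites of `X` and `W_X = (1 ⊗ U)ᴴ SW_X (1 ⊗ U)`. Then `Uᴴ ⊗ U = SW_Λ W_Λ`, and since `U`
spreads single-site operators by at most `ξ`, `W_X` is supported within distance `ξ` of `X` on
both copies. Let `I` and `O` be the sites whose `ξ`-ball lies in `A`, resp. in `Aᶜ`, and `M` the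
rest, so that `Uᴴ ⊗ U = SW_A SW_{Aᶜ} W_I W_O W_M`. The first four factors are supported on
`A ⊔ A` or on its complement and are stripped off on the left; `W_M` is supported within
`∂_{2ξ} A`, hence off `∅ ⊔ B`, and is stripped off on the right, leaving `Ω(𝟙) = 0`.
The case `A ∩ ∂_{4ξ} B = ∅` is the mirror image, with `U ⊗ Uᴴ = W_Λ SW_Λ`.
-/

section Support

variable {Λ : Type*} {d : ℕ}

theorem supportedOn_univ (M : Matrix (Λ → Fin d) (Λ → Fin d) ℂ) : SupportedOn Set.univ M := by
  refine ⟨fun _ _ ⟨_, hr, _⟩ => absurd (Set.mem_univ _) hr, fun x y x' y' hx hy _ _ => ?_⟩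
  obtain rfl : x = x' := funext fun r => hx r (Set.mem_univ r)
  obtain rfl : y = y' := funext fun r => hy r (Set.mem_univ r)
  rfl

theorem SupportedOn.mono {S T : Set Λ} {M : Matrix (Λ → Fin d) (Λ → Fin d) ℂ}
    (h : SupportedOn S M) (hST : S ⊆ T) : SupportedOn T M := by
  refine ⟨fun x y ⟨r, hr, hne⟩ => h.1 x y ⟨r, fun hS => hr (hST hS), hne⟩, ?_⟩
  intro x y x' y' hx hy hxy hxy'
  by_cases hc : ∃ r ∉ S, x r ≠ y r
  · obtain ⟨r, hrS, hne⟩ := hc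
    have hrT : r ∈ T := by_contra fun hrT => hne (hxy r hrT)
    rw [h.1 x y ⟨r, hrS, hne⟩, h.1 x' y' ⟨r, hrS, by rwa [← hx r hrT, ← hy r hrT]⟩]
  · push Not at hc
    refine h.2 x y x' y' (fun r hr => hx r (hST hr)) (fun r hr => hy r (hST hr)) hc fun r hr => ?_
    by_cases hrT : r ∈ T
    · rw [← hx r hrT, ← hy r hrT, hc r hr]
    · exact hxy' r hrT

theorem SupportedOn.sum {S : Set Λ} {ι : Type*} {t : Finset ι}
    {f : ι → Matrix (Λ → Fin d) (Λ → Fin d) ℂ} (hf : ∀ i ∈ t, SupportedOn S (f i)) :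
    SupportedOn S (∑ i ∈ t, f i) := by
  refine ⟨fun x y h => ?_, fun x y x' y' hx hy hxy hxy' => ?_⟩ <;> rw [Matrix.sum_apply]
  · exact Finset.sum_eq_zero fun i hi => (hf i hi).1 x y h
  · rw [Matrix.sum_apply]
    exact Finset.sum_congr rfl fun i hi => (hf i hi).2 x y x' y' hx hy hxy hxy'

variable [Fintype Λ]

theorem supportedOn_one (S : Set Λ) : SupportedOn S (1 : Matrix (Λ → Fin d) (Λ → Fin d) ℂ) := by
  refine ⟨fun x y ⟨r, _, hne⟩ => one_apply_ne fun h => hne (congrFun h r), ?_⟩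
  intro x y x' y' hx hy hxy hxy'
  have hiff : x = y ↔ x' = y' := by
    simp only [funext_iff]
    refine forall_congr' fun r => ?_
    by_cases hr : r ∈ S
    · rw [hx r hr, hy r hr]
    · simp [hxy r hr, hxy' r hr]
  simp only [one_apply, hiff]

variable [DecidableEq Λ]

theorem SupportedOn.mul {S : Set Λ} {M N : Matrix (Λ → Fin d) (Λ → Fin d) ℂ}
    (hM : SupportedOn S M) (hN : SupportedOn S N) : SupportedOn S (M * N) := by
  classical
  constructor
  · rintro x y ⟨r, hr, hne⟩
    rw [mul_apply]
    refine Finset.sum_eq_zero fun z _ => ?_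
    by_cases hz : z r = x r
    · rw [hN.1 z y ⟨r, hr, hz ▸ hne⟩, mul_zero]
    · rw [hM.1 x z ⟨r, hr, Ne.symm hz⟩, zero_mul]
  intro x y x' y' hx hy hxy hxy'
  -- exchanging the values of `x` and `x'` off `S` carries the terms `z ~ x` to the terms `z ~ x'`
  let Ψ : (Λ → Fin d) ≃ (Λ → Fin d) := Equiv.piCongrRight fun r =>
    if r ∈ S then Equiv.refl (Fin d) else Equiv.swap (x r) (x' r)
  have hΨS : ∀ z, ∀ r ∈ S, Ψ z r = z r := fun z r hr => by simp [Ψ, hr]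
  have hΨSc : ∀ z, ∀ r ∉ S, Ψ z r = Equiv.swap (x r) (x' r) (z r) := fun z r hr => by
    simp [Ψ, hr]
  rw [mul_apply, mul_apply, ← Equiv.sum_comp Ψ (fun z => M x' z * N z y')]
  refine Finset.sum_congr rfl fun z _ => ?_
  by_cases hz : ∀ r ∉ S, z r = x r
  · have hΨz : ∀ r ∉ S, Ψ z r = x' r := fun r hr => by
      rw [hΨSc z r hr, hz r hr, Equiv.swap_apply_left]
    rw [hM.2 x z x' (Ψ z) hx (fun r hr => (hΨS z r hr).symm) (fun r hr => (hz r hr).symm)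
        fun r hr => (hΨz r hr).symm,
      hN.2 z y (Ψ z) y' (fun r hr => (hΨS z r hr).symm) hy (fun r hr => (hz r hr).trans (hxy r hr))
        fun r hr => (hΨz r hr).trans (hxy' r hr)]
  · push Not at hz
    obtain ⟨r, hr, hne⟩ := hz
    have hΨne : x' r ≠ Ψ z r := by
      rw [hΨSc z r hr]
      by_cases hzx' : z r = x' r
      · rw [hzx', Equiv.swap_apply_right]; exact fun h => hne (hzx'.trans h)
      · rw [Equiv.swap_apply_of_ne_of_ne hne hzx']; exact Ne.symm hzx'
    rw [hM.1 x z ⟨r, hr, Ne.symm hne⟩, hM.1 x' (Ψ z) ⟨r, hr, hΨne⟩, zero_mul, zero_mul]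

end Support

section Symmetric

variable {d : ℕ} {G : Type*} (u : G → Matrix (Fin d) (Fin d) ℂ)
  (Λ : Type*) [Fintype Λ] [DecidableEq Λ]

def symUnitary : Submonoid (Matrix (Λ → Fin d) (Λ → Fin d) ℂ) :=
  unitary _ ⊓ Submonoid.centralizer (Set.range (symOp u))

variable {u Λ}

theorem mem_symUnitary {M : Matrix (Λ → Fin d) (Λ → Fin d) ℂ} :
    M ∈ symUnitary u Λ ↔ IsUnitaryMat M ∧ IsGSymm u M := by
  simp only [symUnitary, Submonoid.mem_inf, Submonoid.mem_centralizer_iff, Set.forall_mem_range]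
  exact and_congr Iff.rfl (forall_congr' fun _ => eq_comm)

theorem conjTranspose_mem_symUnitary {M : Matrix (Λ → Fin d) (Λ → Fin d) ℂ}
    (hM : M ∈ symUnitary u Λ) : Mᴴ ∈ symUnitary u Λ := by
  obtain ⟨⟨hMM, hMM'⟩, hMG⟩ := mem_symUnitary.mp hM
  -- `Mᴴ = M⁻¹` commutes with whatever `M` commutes with
  refine mem_symUnitary.mpr
    ⟨⟨by rwa [conjTranspose_conjTranspose], by rwa [conjTranspose_conjTranspose]⟩, fun g => ?_⟩
  calc Mᴴ * symOp u g = Mᴴ * (symOp u g * M) * Mᴴ := by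
        rw [mul_assoc, mul_assoc, hMM', mul_one]
    _ = symOp u g * Mᴴ := by rw [← hMG g, ← mul_assoc, hMM, one_mul]

end Symmetric

namespace LatticeFlow

variable {d : ℕ} {G : Type} [Group G] {u : G → Matrix (Fin d) (Fin d) ℂ}
  (Φ : LatticeFlow d G u) {Λ : Type} [Fintype Λ] [DecidableEq Λ] {A B : Set Λ}

theorem omega_list_prod_mul {l : List (Matrix (Λ → Fin d) (Λ → Fin d) ℂ)}
    {W : Matrix (Λ → Fin d) (Λ → Fin d) ℂ}
    (hl : ∀ V ∈ l, V ∈ symUnitary u Λ ∧ (SupportedOn A V ∨ SupportedOn Aᶜ V))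
    (hW : W ∈ symUnitary u Λ) : Φ.omega Λ A B (l.prod * W) = Φ.omega Λ A B W := by
  induction l with
  | nil => rw [List.prod_nil, one_mul]
  | cons V l ih =>
    rw [List.forall_mem_cons] at hl
    have hlW : l.prod * W ∈ symUnitary u Λ :=
      mul_mem (list_prod_mem fun V hV => (hl.2 V hV).1) hW
    obtain ⟨hlWu, hlWG⟩ := mem_symUnitary.mp hlW
    obtain ⟨hVu, hVG⟩ := mem_symUnitary.mp hl.1.1
    rw [List.prod_cons, mul_assoc, Φ.left_inv Λ A B _ V hlWu hlWG hVu hVG hl.1.2, ih hl.2]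

theorem omega_mul_list_prod {l : List (Matrix (Λ → Fin d) (Λ → Fin d) ℂ)}
    {W : Matrix (Λ → Fin d) (Λ → Fin d) ℂ}
    (hl : ∀ V ∈ l, V ∈ symUnitary u Λ ∧ (SupportedOn B V ∨ SupportedOn Bᶜ V))
    (hW : W ∈ symUnitary u Λ) : Φ.omega Λ A B (W * l.prod) = Φ.omega Λ A B W := by
  induction l generalizing W with
  | nil => rw [List.prod_nil, mul_one]
  | cons V l ih =>
    rw [List.forall_mem_cons] at hl
    obtain ⟨hWu, hWG⟩ := mem_symUnitary.mp hW
    obtain ⟨hVu, hVG⟩ := mem_symUnitary.mp hl.1.1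
    rw [List.prod_cons, ← mul_assoc, ih hl.2 (mul_mem hW hl.1.1),
      Φ.right_inv Λ A B W V hWu hWG hVu hVG hl.1.2]

theorem omega_list_prod_mul_list_prod_eq_zero {l₁ l₂ : List (Matrix (Λ → Fin d) (Λ → Fin d) ℂ)}
    (hl₁ : ∀ V ∈ l₁, V ∈ symUnitary u Λ ∧ (SupportedOn A V ∨ SupportedOn Aᶜ V))
    (hl₂ : ∀ V ∈ l₂, V ∈ symUnitary u Λ ∧ (SupportedOn B V ∨ SupportedOn Bᶜ V)) :
    Φ.omega Λ A B (l₁.prod * l₂.prod) = 0 := by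
  rw [Φ.omega_list_prod_mul hl₁ (list_prod_mem fun V hV => (hl₂ V hV).1), ← one_mul l₂.prod,
    Φ.omega_mul_list_prod hl₂ (one_mem _), Φ.norm_one]

theorem omega_empty_right {W : Matrix (Λ → Fin d) (Λ → Fin d) ℂ} (hW : W ∈ symUnitary u Λ) :
    Φ.omega Λ A ∅ W = 0 := by
  simpa using Φ.omega_list_prod_mul_list_prod_eq_zero (A := A) (l₁ := []) (l₂ := [W])
    (by simp) (by simpa using ⟨hW, Or.inr (supportedOn_univ W)⟩)

theorem omega_empty_left {W : Matrix (Λ → Fin d) (Λ → Fin d) ℂ} (hW : W ∈ symUnitary u Λ) :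
    Φ.omega Λ ∅ B W = 0 := by
  simpa using Φ.omega_list_prod_mul_list_prod_eq_zero (B := B) (l₁ := [W]) (l₂ := [])
    (by simpa using ⟨hW, Or.inr (supportedOn_univ W)⟩) (by simp)

end LatticeFlow

section SitePerm

variable {Λ : Type*} [Fintype Λ] {d : ℕ}

def sitePerm (d : ℕ) (σ : Equiv.Perm Λ) : Matrix (Λ → Fin d) (Λ → Fin d) ℂ :=
  Equiv.Perm.permMatrix ℂ (σ.symm.arrowCongr (Equiv.refl (Fin d)))

theorem sitePerm_apply (σ : Equiv.Perm Λ) (x y : Λ → Fin d) :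
    sitePerm d σ x y = if x ∘ σ = y then 1 else 0 := by
  simp [sitePerm, Equiv.arrowCongr, Function.comp_def]

theorem sitePerm_one : sitePerm d (1 : Equiv.Perm Λ) = 1 := by
  ext x y
  rw [sitePerm_apply, one_apply, Equiv.Perm.coe_one, Function.comp_id]

theorem conjTranspose_sitePerm (σ : Equiv.Perm Λ) :
    (sitePerm d σ)ᴴ = sitePerm d σ⁻¹ := by
  ext x y
  rw [conjTranspose_apply, sitePerm_apply, sitePerm_apply]
  have : y ∘ σ = x ↔ x ∘ ⇑σ⁻¹ = y := by
    constructor <;> rintro rfl <;> ext r <;> simp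
  split_ifs <;> simp_all

theorem supportedOn_sitePerm {S : Set Λ} {σ : Equiv.Perm Λ} (hσ : ∀ s ∉ S, σ s = s) :
    SupportedOn S (sitePerm d σ) := by
  have hσS : ∀ r ∈ S, σ r ∈ S := fun r hr =>
    by_contra fun hσr => hσr (by rwa [σ.injective (hσ _ hσr)])
  refine ⟨fun x y ⟨s, hs, hne⟩ => ?_, fun x y x' y' hx hy hxy hxy' => ?_⟩
  · rw [sitePerm_apply, if_neg]
    rintro rfl
    exact hne (by simp [hσ s hs])
  rw [sitePerm_apply, sitePerm_apply]
  congr 1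
  simp only [funext_iff, Function.comp_apply, eq_iff_iff]
  refine forall_congr' fun r => ?_
  by_cases hr : r ∈ S
  · rw [hx _ (hσS r hr), hy r hr]
  · simp [hσ r hr, hxy r hr, hxy' r hr]

variable [DecidableEq Λ]

theorem sitePerm_mul_apply (σ : Equiv.Perm Λ) (M : Matrix (Λ → Fin d) (Λ → Fin d) ℂ)
    (x y : Λ → Fin d) : (sitePerm d σ * M) x y = M (x ∘ σ) y := by
  simp [sitePerm, PEquiv.toMatrix_toPEquiv_mul, Equiv.arrowCongr, Function.comp_def]

theorem mul_sitePerm_apply (σ : Equiv.Perm Λ) (M : Matrix (Λ → Fin d) (Λ → Fin d) ℂ)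
    (x y : Λ → Fin d) : (M * sitePerm d σ) x y = M x (y ∘ ⇑σ⁻¹) := by
  simp [sitePerm, PEquiv.mul_toMatrix_toPEquiv, Equiv.arrowCongr, Function.comp_def]

theorem sitePerm_mul (σ τ : Equiv.Perm Λ) :
    sitePerm d σ * sitePerm d τ = sitePerm d (σ * τ) := by
  ext x y
  rw [sitePerm_mul_apply, sitePerm_apply, sitePerm_apply, Equiv.Perm.coe_mul, Function.comp_assoc]

theorem sitePerm_mem_symUnitary {G : Type*} (u : G → Matrix (Fin d) (Fin d) ℂ)
    (σ : Equiv.Perm Λ) : sitePerm d σ ∈ symUnitary u Λ := by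
  refine mem_symUnitary.mpr ⟨⟨?_, ?_⟩, fun g => ?_⟩
  · rw [conjTranspose_sitePerm, sitePerm_mul, inv_mul_cancel, sitePerm_one]
  · rw [conjTranspose_sitePerm, sitePerm_mul, mul_inv_cancel, sitePerm_one]
  ext x y
  rw [sitePerm_mul_apply, mul_sitePerm_apply]
  simp only [symOp, of_apply, Function.comp_apply]
  rw [← Equiv.prod_comp σ fun r => u g (x r) (y (σ⁻¹ r))]
  simp

end SitePerm

section Stack

variable {Λ₁ Λ₂ : Type*} {d : ℕ}

def stack (M : Matrix (Λ₁ → Fin d) (Λ₁ → Fin d) ℂ) (N : Matrix (Λ₂ → Fin d) (Λ₂ → Fin d) ℂ) :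
    Matrix (Λ₁ ⊕ Λ₂ → Fin d) (Λ₁ ⊕ Λ₂ → Fin d) ℂ :=
  reindex (Equiv.sumArrowEquivProdArrow Λ₁ Λ₂ (Fin d)).symm
    (Equiv.sumArrowEquivProdArrow Λ₁ Λ₂ (Fin d)).symm (kroneckerMap (· * ·) M N)

theorem stack_apply (M : Matrix (Λ₁ → Fin d) (Λ₁ → Fin d) ℂ)
    (N : Matrix (Λ₂ → Fin d) (Λ₂ → Fin d) ℂ) (x y : Λ₁ ⊕ Λ₂ → Fin d) :
    stack M N x y = M (x ∘ Sum.inl) (y ∘ Sum.inl) * N (x ∘ Sum.inr) (y ∘ Sum.inr) :=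
  rfl

theorem conjTranspose_stack (M : Matrix (Λ₁ → Fin d) (Λ₁ → Fin d) ℂ)
    (N : Matrix (Λ₂ → Fin d) (Λ₂ → Fin d) ℂ) : (stack M N)ᴴ = stack Mᴴ Nᴴ := by
  simp only [stack, conjTranspose_reindex, conjTranspose_kronecker]

theorem SupportedOn.stack {S : Set Λ₁} {T : Set Λ₂} {M : Matrix (Λ₁ → Fin d) (Λ₁ → Fin d) ℂ}
    {N : Matrix (Λ₂ → Fin d) (Λ₂ → Fin d) ℂ} (hM : SupportedOn S M) (hN : SupportedOn T N) :
    SupportedOn (Sum.inl '' S ∪ Sum.inr '' T) (_root_.stack M N) := by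
  refine ⟨fun x y ⟨s, hs, hne⟩ => ?_, fun x y x' y' hx hy hxy hxy' => ?_⟩
  · rw [stack_apply]
    rcases s with r | r
    · rw [hM.1 _ _ ⟨r, fun hr => hs (Or.inl ⟨r, hr, rfl⟩), hne⟩, zero_mul]
    · rw [hN.1 _ _ ⟨r, fun hr => hs (Or.inr ⟨r, hr, rfl⟩), hne⟩, mul_zero]
  rw [stack_apply, stack_apply,
    hM.2 (x ∘ Sum.inl) (y ∘ Sum.inl) (x' ∘ Sum.inl) (y' ∘ Sum.inl)
      (fun r hr => hx _ (Or.inl ⟨r, hr, rfl⟩)) (fun r hr => hy _ (Or.inl ⟨r, hr, rfl⟩)) (fun r hr => hxy _ (by simpa using hr))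
      (fun r hr => hxy' _ (by simpa using hr)),
    hN.2 (x ∘ Sum.inr) (y ∘ Sum.inr) (x' ∘ Sum.inr) (y' ∘ Sum.inr)
      (fun r hr => hx _ (Or.inr ⟨r, hr, rfl⟩)) (fun r hr => hy _ (Or.inr ⟨r, hr, rfl⟩)) (fun r hr => hxy _ (by simpa using hr))
      (fun r hr => hxy' _ (by simpa using hr))]

theorem compl_image_inl_union_image_inr (P₁ : Set Λ₁) (P₂ : Set Λ₂) :
    (Sum.inl '' P₁ ∪ Sum.inr '' P₂)ᶜ = Sum.inl '' P₁ᶜ ∪ Sum.inr '' P₂ᶜ := by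
  ext (r | r) <;> simp

theorem SupportedOn.mono_inl_inr {Y₁ P₁ : Set Λ₁} {Y₂ P₂ : Set Λ₂}
    {M : Matrix (Λ₁ ⊕ Λ₂ → Fin d) (Λ₁ ⊕ Λ₂ → Fin d) ℂ}
    (h : SupportedOn (Sum.inl '' Y₁ ∪ Sum.inr '' Y₂) M) (h₁ : Y₁ ⊆ P₁) (h₂ : Y₂ ⊆ P₂) :
    SupportedOn (Sum.inl '' P₁ ∪ Sum.inr '' P₂) M :=
  h.mono (Set.union_subset_union (Set.image_mono h₁) (Set.image_mono h₂))

variable [Fintype Λ₁] [Fintype Λ₂]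

theorem stack_one : stack (1 : Matrix (Λ₁ → Fin d) (Λ₁ → Fin d) ℂ)
    (1 : Matrix (Λ₂ → Fin d) (Λ₂ → Fin d) ℂ) = 1 := by
  simp only [stack, reindex_apply, one_kronecker_one, submatrix_one_equiv]

theorem symOp_sum_eq_stack {G : Type*} (u : G → Matrix (Fin d) (Fin d) ℂ) (g : G) :
    (symOp u g : Matrix (Λ₁ ⊕ Λ₂ → Fin d) (Λ₁ ⊕ Λ₂ → Fin d) ℂ) =
      stack (symOp u g) (symOp u g) := by
  ext x y
  exact Fintype.prod_sum_type _

variable [DecidableEq Λ₁] [DecidableEq Λ₂]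

theorem stack_mul (M M' : Matrix (Λ₁ → Fin d) (Λ₁ → Fin d) ℂ)
    (N N' : Matrix (Λ₂ → Fin d) (Λ₂ → Fin d) ℂ) :
    stack M N * stack M' N' = stack (M * M') (N * N') := by
  simp only [stack, reindex_apply, submatrix_mul_equiv, mul_kronecker_mul]

theorem stack_mem_symUnitary {G : Type*} {u : G → Matrix (Fin d) (Fin d) ℂ}
    {M : Matrix (Λ₁ → Fin d) (Λ₁ → Fin d) ℂ} {N : Matrix (Λ₂ → Fin d) (Λ₂ → Fin d) ℂ}
    (hM : M ∈ symUnitary u Λ₁) (hN : N ∈ symUnitary u Λ₂) : stack M N ∈ symUnitary u (Λ₁ ⊕ Λ₂) := by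
  obtain ⟨⟨hMM, hMM'⟩, hMG⟩ := mem_symUnitary.mp hM
  obtain ⟨⟨hNN, hNN'⟩, hNG⟩ := mem_symUnitary.mp hN
  refine mem_symUnitary.mpr ⟨⟨?_, ?_⟩, fun g => ?_⟩
  · rw [conjTranspose_stack, stack_mul, hMM, hNN, stack_one]
  · rw [conjTranspose_stack, stack_mul, hMM', hNN', stack_one]
  · rw [symOp_sum_eq_stack, stack_mul, stack_mul, hMG g, hNG g]

end Stack

theorem LatticeFlow.omega_stack {d : ℕ} {G : Type} [Group G] {u : G → Matrix (Fin d) (Fin d) ℂ}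
    (Φ : LatticeFlow d G u) {Λ₁ Λ₂ : Type} [Fintype Λ₁] [DecidableEq Λ₁] [Fintype Λ₂]
    [DecidableEq Λ₂] (A₁ B₁ : Set Λ₁) (A₂ B₂ : Set Λ₂) {U₁ : Matrix (Λ₁ → Fin d) (Λ₁ → Fin d) ℂ}
    {U₂ : Matrix (Λ₂ → Fin d) (Λ₂ → Fin d) ℂ} (hU₁ : U₁ ∈ symUnitary u Λ₁)
    (hU₂ : U₂ ∈ symUnitary u Λ₂) :
    Φ.omega (Λ₁ ⊕ Λ₂) (Sum.inl '' A₁ ∪ Sum.inr '' A₂) (Sum.inl '' B₁ ∪ Sum.inr '' B₂)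
      (stack U₁ U₂) = Φ.omega Λ₁ A₁ B₁ U₁ + Φ.omega Λ₂ A₂ B₂ U₂ :=
  Φ.stacking Λ₁ Λ₂ A₁ B₁ A₂ B₂ U₁ U₂ (mem_symUnitary.mp hU₁).1 (mem_symUnitary.mp hU₁).2
    (mem_symUnitary.mp hU₂).1 (mem_symUnitary.mp hU₂).2

section Swap

variable {Λ : Type*} {d : ℕ}

open Classical in
noncomputable def swapSites (X : Set Λ) : Equiv.Perm (Λ ⊕ Λ) :=
  Function.Involutive.toPerm
    (Sum.elim (fun r => if r ∈ X then Sum.inr r else Sum.inl r)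
      fun r => if r ∈ X then Sum.inl r else Sum.inr r)
    fun s => by rcases s with r | r <;> by_cases hr : r ∈ X <;> simp [hr]

open Classical in
theorem swapSites_inl (X : Set Λ) (r : Λ) :
    swapSites X (Sum.inl r) = if r ∈ X then Sum.inr r else Sum.inl r := rfl

open Classical in
theorem swapSites_inr (X : Set Λ) (r : Λ) :
    swapSites X (Sum.inr r) = if r ∈ X then Sum.inl r else Sum.inr r := rfl

theorem swapSites_mul (X Y : Set Λ) : swapSites X * swapSites Y = swapSites (symmDiff X Y) := by
  ext s
  rcases s with r | r <;> by_cases hX : r ∈ X <;> by_cases hY : r ∈ Y <;>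
    simp [swapSites_inl, swapSites_inr, hX, hY, Set.mem_symmDiff]

theorem swapSites_empty : swapSites (∅ : Set Λ) = 1 := by
  ext (r | r) <;> simp [swapSites_inl, swapSites_inr]

theorem swapSites_inv (X : Set Λ) : (swapSites X)⁻¹ = swapSites X := by
  rw [inv_eq_iff_mul_eq_one, swapSites_mul, symmDiff_self, Set.bot_eq_empty, swapSites_empty]

theorem swapSites_apply_of_notMem {X : Set Λ} {s : Λ ⊕ Λ}
    (hs : s ∉ Sum.inl '' X ∪ Sum.inr '' X) : swapSites X s = s := by
  rcases s with r | r <;> simp_all [swapSites_inl, swapSites_inr]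

theorem supportedOn_sitePerm_swapSites [Fintype Λ] (X : Set Λ) :
    SupportedOn (Sum.inl '' X ∪ Sum.inr '' X) (sitePerm d (swapSites X)) :=
  supportedOn_sitePerm fun _ => swapSites_apply_of_notMem

variable [Fintype Λ] [DecidableEq Λ]

theorem sitePerm_swapSites_univ_mul_self :
    sitePerm d (swapSites (Set.univ : Set Λ)) * sitePerm d (swapSites Set.univ) = 1 := by
  rw [sitePerm_mul, swapSites_mul, symmDiff_self, Set.bot_eq_empty, swapSites_empty, sitePerm_one]

theorem sitePerm_swapSites_univ_eq_mul_compl (X : Set Λ) :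
    sitePerm d (swapSites Set.univ) = sitePerm d (swapSites X) * sitePerm d (swapSites Xᶜ) := by
  rw [sitePerm_mul, swapSites_mul, symmDiff_compl_self, Set.top_eq_univ]

theorem sitePerm_swapSites_univ_mul_stack (M N : Matrix (Λ → Fin d) (Λ → Fin d) ℂ) :
    sitePerm d (swapSites Set.univ) * stack M N = stack N M * sitePerm d (swapSites Set.univ) := by
  ext x y
  rw [sitePerm_mul_apply, mul_sitePerm_apply, swapSites_inv, stack_apply, stack_apply, mul_comm]
  congr 2 <;> ext r <;> simp [swapSites_inl, swapSites_inr]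

end Swap

section SiteUnit

variable {Λ : Type*} [Fintype Λ] [DecidableEq Λ] {d : ℕ}

def siteUnit (d : ℕ) (r : Λ) (a b : Fin d) : Matrix (Λ → Fin d) (Λ → Fin d) ℂ :=
  of fun x y => if x r = a ∧ y r = b ∧ ∀ s ≠ r, x s = y s then 1 else 0

theorem supportedOn_siteUnit (r : Λ) (a b : Fin d) : SupportedOn {r} (siteUnit d r a b) := by
  refine ⟨fun x y ⟨s, hs, hne⟩ => if_neg fun h => hne (h.2.2 s hs), ?_⟩
  intro x y x' y' hx hy hxy hxy'
  have hoff : ∀ s ≠ r, x s = y s := fun s hs => hxy s hs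
  have hoff' : ∀ s ≠ r, x' s = y' s := fun s hs => hxy' s hs
  simp only [siteUnit, of_apply, hx r rfl, hy r rfl, iff_true_intro hoff, iff_true_intro hoff']

theorem sitePerm_swapSites_singleton (r : Λ) :
    sitePerm d (swapSites {r}) = ∑ a, ∑ b, stack (siteUnit d r a b) (siteUnit d r b a) := by
  ext x y
  simp only [sitePerm_apply, Matrix.sum_apply, stack_apply, siteUnit, of_apply,
    ite_zero_mul_ite_zero, mul_one]
  rw [Fintype.sum_eq_single (x (Sum.inl r)) fun a ha =>
      Finset.sum_eq_zero fun b _ => if_neg fun h => ha h.1.1.symm,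
    Fintype.sum_eq_single (x (Sum.inr r)) fun b hb => if_neg fun h => hb h.2.1.symm]
  refine if_congr ?_ rfl rfl
  simp only [funext_iff, Sum.forall, Function.comp_apply, swapSites_inl, swapSites_inr,
    Set.mem_singleton_iff, true_and]
  constructor
  · rintro ⟨h₁, h₂⟩
    exact ⟨⟨by simpa using (h₁ r).symm, fun s hs => by simpa [hs] using h₁ s⟩,
      by simpa using (h₂ r).symm, fun s hs => by simpa [hs] using h₂ s⟩
  · rintro ⟨⟨h₁, h₁'⟩, h₂, h₂'⟩
    constructor <;> intro s <;> by_cases hs : s = r <;> simp_all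

end SiteUnit

section DressedSwap

variable {Λ : Type*} [Fintype Λ] [DecidableEq Λ] {d : ℕ} {U : Matrix (Λ → Fin d) (Λ → Fin d) ℂ}

noncomputable def dressedSwap (U : Matrix (Λ → Fin d) (Λ → Fin d) ℂ) (X : Set Λ) :
    Matrix (Λ ⊕ Λ → Fin d) (Λ ⊕ Λ → Fin d) ℂ :=
  stack 1 Uᴴ * sitePerm d (swapSites X) * stack 1 U

theorem dressedSwap_mul (hU : U * Uᴴ = 1) (X Y : Set Λ) :
    dressedSwap U X * dressedSwap U Y = dressedSwap U (symmDiff X Y) := by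
  have hmid : stack (1 : Matrix (Λ → Fin d) (Λ → Fin d) ℂ) U * stack 1 Uᴴ = 1 := by
    rw [stack_mul, one_mul, hU, stack_one]
  simp only [dressedSwap, mul_assoc]
  rw [← mul_assoc (stack 1 U), hmid, one_mul, ← mul_assoc (sitePerm d _), sitePerm_mul,
    swapSites_mul]

theorem dressedSwap_union (hU : U * Uᴴ = 1) {X Y : Set Λ} (hXY : Disjoint X Y) :
    dressedSwap U (X ∪ Y) = dressedSwap U X * dressedSwap U Y := by
  rw [dressedSwap_mul hU, hXY.symmDiff_eq_sup]
  rfl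

theorem dressedSwap_univ_eq_mul_compl (hU : U * Uᴴ = 1) (X : Set Λ) :
    dressedSwap U Set.univ = dressedSwap U X * dressedSwap U Xᶜ := by
  rw [← dressedSwap_union hU disjoint_compl_right, Set.union_compl_self]

theorem dressedSwap_univ_eq_compl_mul (hU : U * Uᴴ = 1) (X : Set Λ) :
    dressedSwap U Set.univ = dressedSwap U Xᶜ * dressedSwap U X := by
  rw [← dressedSwap_union hU disjoint_compl_left, Set.compl_union_self]

theorem dressedSwap_mem_symUnitary {G : Type*} {u : G → Matrix (Fin d) (Fin d) ℂ}
    (hU : U ∈ symUnitary u Λ) (X : Set Λ) : dressedSwap U X ∈ symUnitary u (Λ ⊕ Λ) :=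
  mul_mem (mul_mem (stack_mem_symUnitary (one_mem _) (conjTranspose_mem_symUnitary hU))
    (sitePerm_mem_symUnitary u _)) (stack_mem_symUnitary (one_mem _) hU)

theorem stack_conjTranspose_self_eq (U : Matrix (Λ → Fin d) (Λ → Fin d) ℂ) :
    stack Uᴴ U = sitePerm d (swapSites Set.univ) * dressedSwap U Set.univ := by
  calc stack Uᴴ U = stack Uᴴ 1 * stack 1 U := by rw [stack_mul, mul_one, one_mul]
    _ = sitePerm d (swapSites Set.univ) * stack 1 Uᴴ * sitePerm d (swapSites Set.univ) *
          stack 1 U := by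
      rw [sitePerm_swapSites_univ_mul_stack, mul_assoc (stack Uᴴ 1),
        sitePerm_swapSites_univ_mul_self, mul_one]
    _ = _ := by simp only [dressedSwap, mul_assoc]

theorem stack_self_conjTranspose_eq (U : Matrix (Λ → Fin d) (Λ → Fin d) ℂ) :
    stack U Uᴴ = dressedSwap U Set.univ * sitePerm d (swapSites Set.univ) := by
  calc stack U Uᴴ = stack 1 Uᴴ * stack U 1 := by rw [stack_mul, mul_one, one_mul]
    _ = stack 1 Uᴴ * sitePerm d (swapSites Set.univ) *
          (sitePerm d (swapSites Set.univ) * stack U 1) := by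
      rw [← mul_assoc, mul_assoc (stack 1 Uᴴ), sitePerm_swapSites_univ_mul_self, mul_one]
    _ = _ := by rw [sitePerm_swapSites_univ_mul_stack, dressedSwap]; simp only [mul_assoc]

variable [MetricSpace Λ] {ξ : ℝ}

theorem supportedOn_dressedSwap_singleton (hU : IsStrictLPU ξ U) (r : Λ) :
    SupportedOn (Sum.inl '' {r} ∪ Sum.inr '' Metric.closedBall r ξ) (dressedSwap U {r}) := by
  rw [dressedSwap, sitePerm_swapSites_singleton]
  simp only [Finset.mul_sum, Finset.sum_mul, stack_mul, one_mul, mul_one]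
  exact SupportedOn.sum fun a _ => SupportedOn.sum fun b _ =>
    (supportedOn_siteUnit r a b).stack (hU.2 r _ (supportedOn_siteUnit r b a))

theorem supportedOn_dressedSwap (hU : IsStrictLPU ξ U) (hξ : 0 ≤ ξ) (X : Set Λ) :
    SupportedOn
      (Sum.inl '' (⋃ t ∈ X, Metric.closedBall t ξ) ∪ Sum.inr '' ⋃ t ∈ X, Metric.closedBall t ξ)
      (dressedSwap U X) := by
  induction X, X.toFinite using Set.Finite.induction_on with
  | empty =>
    rw [dressedSwap, swapSites_empty, sitePerm_one, mul_one, stack_mul, one_mul, hU.1.1, stack_one]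
    exact supportedOn_one _
  | @insert r X hr _ ih =>
    have hball : Metric.closedBall r ξ ⊆ ⋃ t ∈ insert r X, Metric.closedBall t ξ :=
      Set.subset_biUnion_of_mem (u := fun t => Metric.closedBall t ξ) (Set.mem_insert r X)
    have hballs : (⋃ t ∈ X, Metric.closedBall t ξ) ⊆ ⋃ t ∈ insert r X, Metric.closedBall t ξ :=
      Set.biUnion_subset_biUnion_left (Set.subset_insert r X)
    have hsplit : dressedSwap U (insert r X) = dressedSwap U {r} * dressedSwap U X := by
      rw [dressedSwap_mul hU.1.2, Disjoint.symmDiff_eq_sup (Set.disjoint_singleton_left.mpr hr)]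
      exact congrArg _ (Set.insert_eq r X)
    rw [hsplit]
    refine SupportedOn.mul ((supportedOn_dressedSwap_singleton hU r).mono ?_) (ih.mono ?_)
    · exact Set.union_subset_union (Set.image_mono (Set.singleton_subset_iff.mpr
        (hball (Metric.mem_closedBall_self hξ)))) (Set.image_mono hball)
    · exact Set.union_subset_union (Set.image_mono hballs) (Set.image_mono hballs)

end DressedSwap

section Regions

variable {Λ : Type*} [MetricSpace Λ] {ξ : ℝ}

def innerSites (ξ : ℝ) (S : Set Λ) : Set Λ := {r | Metric.closedBall r ξ ⊆ S}

theorem disjoint_innerSites_compl (hξ : 0 ≤ ξ) (S : Set Λ) :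
    Disjoint (innerSites ξ S) (innerSites ξ Sᶜ) :=
  Set.disjoint_left.mpr fun _ hS hSc =>
    hSc (Metric.mem_closedBall_self hξ) (hS (Metric.mem_closedBall_self hξ))

theorem biUnion_closedBall_innerSites_subset (S : Set Λ) :
    ⋃ t ∈ innerSites ξ S, Metric.closedBall t ξ ⊆ S :=
  Set.iUnion₂_subset fun _ ht => ht

theorem biUnion_closedBall_compl_innerSites_subset_thickBd {ℓ : ℝ} (hℓ : 2 * ξ ≤ ℓ)
    (S : Set Λ) :
    ⋃ t ∈ (innerSites ξ S ∪ innerSites ξ Sᶜ)ᶜ, Metric.closedBall t ξ ⊆ thickBd ℓ S := by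
  intro s hs
  obtain ⟨t, ht, hst⟩ := Set.mem_iUnion₂.mp hs
  simp only [Set.mem_compl_iff, Set.mem_union, not_or] at ht
  obtain ⟨w, hw, hwS⟩ := Set.not_subset.mp ht.1
  obtain ⟨b, hb, hbS⟩ := Set.not_subset.mp ht.2
  rw [Metric.mem_closedBall] at hst hw hb
  refine ⟨⟨b, not_not.mp hbS, ?_⟩, ⟨w, hwS, ?_⟩⟩ <;>
    linarith [dist_triangle_right s b t, dist_triangle_right s w t]

end Regions

section Conservation

variable {Λ : Type} [Fintype Λ] [DecidableEq Λ] [MetricSpace Λ] {d : ℕ} {ξ : ℝ}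
  {U : Matrix (Λ → Fin d) (Λ → Fin d) ℂ}

theorem supportedOn_dressedSwap_innerSites (hU : IsStrictLPU ξ U) (hξ : 0 ≤ ξ) (S : Set Λ) :
    SupportedOn (Sum.inl '' S ∪ Sum.inr '' S) (dressedSwap U (innerSites ξ S)) :=
  (supportedOn_dressedSwap hU hξ _).mono_inl_inr (biUnion_closedBall_innerSites_subset S)
    (biUnion_closedBall_innerSites_subset S)

variable {G : Type} [Group G] {u : G → Matrix (Fin d) (Fin d) ℂ} (Φ : LatticeFlow d G u)

theorem LatticeFlow.omega_stack_conjTranspose_self_eq_zero (hU : IsStrictLPU ξ U)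
    (hUG : U ∈ symUnitary u Λ) (hξ : 0 ≤ ξ) {A B : Set Λ}
    (hB : Disjoint (⋃ t ∈ (innerSites ξ A ∪ innerSites ξ Aᶜ)ᶜ, Metric.closedBall t ξ) B) :
    Φ.omega (Λ ⊕ Λ) (Sum.inl '' A ∪ Sum.inr '' A) (Sum.inl '' ∅ ∪ Sum.inr '' B)
      (stack Uᴴ U) = 0 := by
  have hdecomp : stack Uᴴ U =
      [sitePerm d (swapSites A), sitePerm d (swapSites Aᶜ), dressedSwap U (innerSites ξ A),
        dressedSwap U (innerSites ξ Aᶜ)].prod *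
        [dressedSwap U (innerSites ξ A ∪ innerSites ξ Aᶜ)ᶜ].prod := by
    rw [stack_conjTranspose_self_eq, sitePerm_swapSites_univ_eq_mul_compl A,
      dressedSwap_univ_eq_mul_compl hU.1.2 (innerSites ξ A ∪ innerSites ξ Aᶜ),
      dressedSwap_union hU.1.2 (disjoint_innerSites_compl hξ A)]
    simp only [List.prod_cons, List.prod_nil, mul_one, mul_assoc]
  rw [hdecomp]
  refine Φ.omega_list_prod_mul_list_prod_eq_zero ?_ ?_ <;>
    simp only [List.forall_mem_cons, List.not_mem_nil, IsEmpty.forall_iff, forall_const, and_true,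
      compl_image_inl_union_image_inr]
  · exact ⟨⟨sitePerm_mem_symUnitary u _, .inl (supportedOn_sitePerm_swapSites A)⟩,
      ⟨sitePerm_mem_symUnitary u _, .inr (supportedOn_sitePerm_swapSites Aᶜ)⟩,
      ⟨dressedSwap_mem_symUnitary hUG _, .inl (supportedOn_dressedSwap_innerSites hU hξ A)⟩,
      ⟨dressedSwap_mem_symUnitary hUG _, .inr (supportedOn_dressedSwap_innerSites hU hξ Aᶜ)⟩⟩
  · exact ⟨dressedSwap_mem_symUnitary hUG _, .inr ((supportedOn_dressedSwap hU hξ _).mono_inl_inr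
      (by simp) hB.subset_compl_right)⟩

theorem LatticeFlow.omega_stack_self_conjTranspose_eq_zero (hU : IsStrictLPU ξ U)
    (hUG : U ∈ symUnitary u Λ) (hξ : 0 ≤ ξ) {A B : Set Λ}
    (hA : Disjoint (⋃ t ∈ (innerSites ξ B ∪ innerSites ξ Bᶜ)ᶜ, Metric.closedBall t ξ) A) :
    Φ.omega (Λ ⊕ Λ) (Sum.inl '' A ∪ Sum.inr '' ∅) (Sum.inl '' B ∪ Sum.inr '' B)
      (stack U Uᴴ) = 0 := by
  have hdecomp : stack U Uᴴ =
      [dressedSwap U (innerSites ξ B ∪ innerSites ξ Bᶜ)ᶜ].prod *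
        [dressedSwap U (innerSites ξ B), dressedSwap U (innerSites ξ Bᶜ),
          sitePerm d (swapSites B), sitePerm d (swapSites Bᶜ)].prod := by
    rw [stack_self_conjTranspose_eq, sitePerm_swapSites_univ_eq_mul_compl B,
      dressedSwap_univ_eq_compl_mul hU.1.2 (innerSites ξ B ∪ innerSites ξ Bᶜ),
      dressedSwap_union hU.1.2 (disjoint_innerSites_compl hξ B)]
    simp only [List.prod_cons, List.prod_nil, mul_one, mul_assoc]
  rw [hdecomp]
  refine Φ.omega_list_prod_mul_list_prod_eq_zero ?_ ?_ <;>
    simp only [List.forall_mem_cons, List.not_mem_nil, IsEmpty.forall_iff, forall_const, and_true,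
      compl_image_inl_union_image_inr]
  · exact ⟨dressedSwap_mem_symUnitary hUG _, .inr ((supportedOn_dressedSwap hU hξ _).mono_inl_inr
      hA.subset_compl_right (by simp))⟩
  · exact ⟨⟨dressedSwap_mem_symUnitary hUG _, .inl (supportedOn_dressedSwap_innerSites hU hξ B)⟩,
      ⟨dressedSwap_mem_symUnitary hUG _, .inr (supportedOn_dressedSwap_innerSites hU hξ Bᶜ)⟩,
      ⟨sitePerm_mem_symUnitary u _, .inl (supportedOn_sitePerm_swapSites B)⟩,
      ⟨sitePerm_mem_symUnitary u _, .inr (supportedOn_sitePerm_swapSites Bᶜ)⟩⟩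

end Conservation

theorem flow_conservation_general
    {d : ℕ} {G : Type} [Group G]
    (u : G → Matrix (Fin d) (Fin d) ℂ)
    (Φ : LatticeFlow d G u)
    (Λ : Type) [Fintype Λ] [DecidableEq Λ] [MetricSpace Λ]
    (ξ : ℝ) (hξ : 0 ≤ ξ)
    (U : Matrix (Λ → Fin d) (Λ → Fin d) ℂ)
    (hU : IsStrictLPU ξ U) (hUG : IsGSymm u U)
    (A B : Set Λ)
    (hsep : thickBd (4 * ξ) A ∩ B = ∅ ∨ A ∩ thickBd (4 * ξ) B = ∅) :
    Φ.omega Λ A B U = 0 := by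
  have hUmem : U ∈ symUnitary u Λ := mem_symUnitary.mpr ⟨hU.1, hUG⟩
  have hUHmem := conjTranspose_mem_symUnitary hUmem
  have hmiddle (S : Set Λ) := biUnion_closedBall_compl_innerSites_subset_thickBd
    (show 2 * ξ ≤ 4 * ξ by linarith) S
  rcases hsep with hA | hB
  · have h := Φ.omega_stack A ∅ A B hUHmem hUmem
    rw [Φ.omega_empty_right hUHmem, Φ.omega_stack_conjTranspose_self_eq_zero hU hUmem hξ
      ((Set.disjoint_iff_inter_eq_empty.mpr hA).mono_left (hmiddle A))] at h
    linarith
  · have h := Φ.omega_stack A B ∅ B hUmem hUHmem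
    rw [Φ.omega_empty_left hUHmem, Φ.omega_stack_self_conjTranspose_eq_zero hU hUmem hξ
      ((Set.disjoint_iff_inter_eq_empty.mpr hB).symm.mono_left (hmiddle B))] at h
    linarith

/-- Corollary 3 (conservation law): if `(∂_{4ξ}A) ∩ B = ∅` or `A ∩ (∂_{4ξ}B) = ∅`, then
`Ω_{A,B}(U) = 0` for any `G`-symmetric strict LPU `U` with operator spreading length `ξ`. -/
theorem flow_conservation
    {d : ℕ} (hd : 1 ≤ d) {G : Type} [Group G]
    (u : G → Matrix (Fin d) (Fin d) ℂ)
    (hu_unit : ∀ g, IsUnitaryMat (u g))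
    (hu_mul : ∀ g h, u (g * h) = u g * u h)
    (Φ : LatticeFlow d G u)
    (Λ : Type) [Fintype Λ] [DecidableEq Λ] [MetricSpace Λ]
    (ξ : ℝ) (hξ : 0 ≤ ξ)
    (U : Matrix (Λ → Fin d) (Λ → Fin d) ℂ)
    (hU : IsStrictLPU ξ U) (hUG : IsGSymm u U)
    (A B : Set Λ)
    (hsep : thickBd (4 * ξ) A ∩ B = ∅ ∨ A ∩ thickBd (4 * ξ) B = ∅) :
    Φ.omega Λ A B U = 0 :=
  flow_conservation_general u Φ Λ ξ hξ U hU hUG A B hsep
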